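/- With probability 1 over G, for every set S \subseteq [n] of size at most d that is not a clique in G, the pseudoexpectation satisfies \tilde{E}_G[x_S] = 0. -/

import Mathlib

open Finset

attribute [local instance] Classical.propDecidable

namespace PlantedClique

/-- The set of potential edges of a graph on vertex set `Fin n`:
unordered pairs of distinct vertices. -/
abbrev Edge (n : ℕ) := {e : Sym2 (Fin n) // ¬ e.IsDiag}

/-- A graph on vertex set `Fin n`, identified with its Boolean edge indicators. -/
abbrev Graph (n : ℕ) := Edge n → Bool

/-- The `±1` edge indicator `G_e`: `+1` if `e` is an edge of `G` and `-1` otherwise. -/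
noncomputable def edgeSign {n : ℕ} (G : Graph n) (e : Edge n) : ℝ := if G e then 1 else -1

/-- The Fourier character `χ_T(G) = ∏_{e ∈ T} G_e`. -/
noncomputable def chi {n : ℕ} (G : Graph n) (T : Finset (Edge n)) : ℝ := ∏ e ∈ T, edgeSign G e

/-- `𝓥(T)`: the set of vertices incident to at least one edge of `T`. -/
noncomputable def vertsOf {n : ℕ} (T : Finset (Edge n)) : Finset (Fin n) :=
  Finset.univ.filter fun v => ∃ e ∈ T, v ∈ (e : Sym2 (Fin n))

/-- `i` and `j` are joined by an edge of `G`. -/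
def hasEdge {n : ℕ} (G : Graph n) (i j : Fin n) : Prop :=
  ∃ e : Edge n, (e : Sym2 (Fin n)) = s(i, j) ∧ G e = true

/-- `S` is a clique in `G`: every pair of distinct vertices of `S` is joined by an edge. -/
def IsClique {n : ℕ} (G : Graph n) (S : Finset (Fin n)) : Prop :=
  ∀ i ∈ S, ∀ j ∈ S, i ≠ j → hasEdge G i j

/-- The pseudo-calibrated pseudoexpectation on monomials:
`Ẽ_G[x_S] = ∑_{T : |𝓥(T) ∪ S| ≤ τ} (ω/n)^{|𝓥(T) ∪ S|} χ_T(G)`. -/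
noncomputable def tE {n : ℕ} (τ : ℕ) (ω : ℝ) (G : Graph n) (S : Finset (Fin n)) : ℝ :=
  ∑ T : Finset (Edge n),
    if (vertsOf T ∪ S).card ≤ τ then (ω / n) ^ (vertsOf T ∪ S).card * chi G T else 0

/-! A non-edge `e` of `G` inside `S` pairs each `T` with `T ∪ {e}`: adding `e` leaves the
vertex set `𝓥(T) ∪ S` unchanged (both endpoints of `e` already lie in `S`), hence also the
weight and the truncation condition, while it flips the sign of `χ_T(G)` because `G_e = -1`.
So the terms of `Ẽ_G[x_S]` cancel in pairs. -/

theorem _root_.Finset.sum_eq_zero_of_insert_eq_neg {α M : Type*} [Fintype α] [DecidableEq α]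
    [AddCommGroup M] (a : α) (f : Finset α → M)
    (hf : ∀ T, a ∉ T → f (insert a T) = -f T) :
    ∑ T, f T = 0 := by
  rw [← powerset_univ, ← insert_erase (mem_univ a),
    sum_powerset_insert (notMem_erase a _), ← sum_add_distrib]
  refine sum_eq_zero fun T hT => ?_
  have haT : a ∉ T := fun ha => notMem_erase a _ (mem_powerset.mp hT ha)
  rw [hf T haT, add_neg_cancel]

theorem vertsOf_insert_union_of_subset {n : ℕ} {e : Edge n} {S : Finset (Fin n)}
    (he : ∀ v ∈ (e : Sym2 (Fin n)), v ∈ S) (T : Finset (Edge n)) :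
    vertsOf (insert e T) ∪ S = vertsOf T ∪ S := by
  ext v
  simp only [vertsOf, mem_union, mem_filter, mem_univ, true_and, mem_insert]
  constructor
  · rintro (⟨f, rfl | hfT, hv⟩ | hv)
    · exact Or.inr (he v hv)
    · exact Or.inl ⟨f, hfT, hv⟩
    · exact Or.inr hv
  · rintro (⟨f, hfT, hv⟩ | hv)
    · exact Or.inl ⟨f, Or.inr hfT, hv⟩
    · exact Or.inr hv

theorem chi_insert_of_eq_false {n : ℕ} {G : Graph n} {e : Edge n} (he : G e = false)
    {T : Finset (Edge n)} (heT : e ∉ T) :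
    chi G (insert e T) = -chi G T := by
  rw [chi, prod_insert heT, edgeSign, he, if_neg Bool.false_ne_true, neg_one_mul, chi]

theorem exists_nonedge_of_not_isClique {n : ℕ} {G : Graph n} {S : Finset (Fin n)}
    (hS : ¬ IsClique G S) :
    ∃ e : Edge n, G e = false ∧ ∀ v ∈ (e : Sym2 (Fin n)), v ∈ S := by
  simp only [IsClique, not_forall] at hS
  obtain ⟨i, hi, j, hj, hij, hnadj⟩ := hS
  refine ⟨⟨s(i, j), by simpa using hij⟩, ?_, ?_⟩
  · exact Bool.eq_false_iff.mpr fun h => hnadj ⟨_, rfl, h⟩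
  · intro v hv
    rcases Sym2.mem_iff.mp hv with rfl | rfl <;> assumption

theorem pE_clique_constraints_general (n τ : ℕ) (ω : ℝ) (G : Graph n) (S : Finset (Fin n))
    (hS : ¬ IsClique G S) :
    tE τ ω G S = 0 := by
  obtain ⟨e, hGe, heS⟩ := exists_nonedge_of_not_isClique hS
  refine sum_eq_zero_of_insert_eq_neg e _ fun T heT => ?_
  rw [vertsOf_insert_union_of_subset heS, chi_insert_of_eq_false hGe heT]
  split_ifs <;> simp

/-- With probability 1 (i.e. for every graph `G`), for every set `S` of
size at most `d` that is not a clique in `G`, the pseudoexpectation satisfies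
`Ẽ_G[x_S] = 0`. -/
theorem pE_clique_constraints (n d τ : ℕ) (ω : ℝ) (G : Graph n) (S : Finset (Fin n))
    (hSd : S.card ≤ d) (hS : ¬ IsClique G S) :
    tE τ ω G S = 0 :=
  pE_clique_constraints_general n τ ω G S hS

end PlantedClique
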